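/- arXiv:1912.13062 — 7 statements merged into one kernel-verified Lean document; each statement's English description precedes it below -/
import Mathlib

section
/- Let λ > 1 and 0 < α < 1 be real numbers. Let (q_n)_{n≥0} be a sequence of reals with 0 ≤ q_n ≤ 1 for all n, and let (x_n)_{n≥0} be a sequence of nonnegative reals satisfying x_0 = α and x_{n+1} = α + λ·(x_n − 1 + q_n) for all n ≥ 0. Then ∑_{i=0}^{∞} λ^{−i} q_i ≥ λ(1−α)/(λ−1), i.e., G(α) − F(α) ≥ 0. -/
/-! With `r = λ⁻¹`, the recursion says that `r ^ n * x n` telescopes: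
`r ^ (n+1) x (n+1) - r ^ n x n = r ^ n (q n - (1 - α r))`. Summing and using `x N ≥ 0`
bounds the partial sums of `∑ r ^ n q n` below by `(1 - α r) ∑_{n<N} r ^ n - α`, whose limit
`(1 - α r) / (1 - r) - α` equals `λ (1 - α) / (λ - 1)`. -/

open Filter Finset Topology

theorem sum_range_inv_pow_mul_eq {K : Type*} [Field K] {lam α : K} {q x : ℕ → K}
    (hlam : lam ≠ 0) (hrec : ∀ n, x (n + 1) = α + lam * (x n - 1 + q n)) (N : ℕ) :
    ∑ n ∈ range N, lam⁻¹ ^ n * q n =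
      lam⁻¹ ^ N * x N - x 0 + (1 - α * lam⁻¹) * ∑ n ∈ range N, lam⁻¹ ^ n := by
  have hstep : ∀ n, lam⁻¹ ^ n * q n =
      (lam⁻¹ ^ (n + 1) * x (n + 1) - lam⁻¹ ^ n * x n) + (1 - α * lam⁻¹) * lam⁻¹ ^ n := by
    intro n
    rw [hrec n, pow_succ]
    field_simp
    ring
  rw [sum_congr rfl fun n _ => hstep n, sum_add_distrib, sum_range_sub (fun n => lam⁻¹ ^ n * x n),
    mul_sum, pow_zero, one_mul]

theorem sum_range_inv_pow_mul_ge {K : Type*} [Field K] [LinearOrder K] [IsStrictOrderedRing K]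
    {lam α : K} {q x : ℕ → K} (hlam : 0 < lam) (hx : ∀ n, 0 ≤ x n)
    (hrec : ∀ n, x (n + 1) = α + lam * (x n - 1 + q n)) (N : ℕ) :
    (1 - α * lam⁻¹) * ∑ n ∈ range N, lam⁻¹ ^ n - x 0 ≤ ∑ n ∈ range N, lam⁻¹ ^ n * q n := by
  rw [sum_range_inv_pow_mul_eq hlam.ne' hrec]
  have := mul_nonneg (pow_nonneg (inv_nonneg.2 hlam.le) N) (hx N)
  linarith

theorem summable_pow_mul_of_unitInterval {r : ℝ} (hr0 : 0 ≤ r) (hr1 : r < 1) {q : ℕ → ℝ}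
    (hq : ∀ n, 0 ≤ q n ∧ q n ≤ 1) : Summable fun n => r ^ n * q n :=
  (summable_geometric_of_lt_one hr0 hr1).of_nonneg_of_le
    (fun n => mul_nonneg (pow_nonneg hr0 n) (hq n).1)
    (fun n => mul_le_of_le_one_right (pow_nonneg hr0 n) (hq n).2)

theorem stmt_2_general (lam α : ℝ) (hlam : 1 < lam)
    (q x : ℕ → ℝ)
    (hq : ∀ n : ℕ, 0 ≤ q n ∧ q n ≤ 1)
    (hxnonneg : ∀ n : ℕ, 0 ≤ x n)
    (hx0 : x 0 = α) (hrec : ∀ n : ℕ, x (n + 1) = α + lam * (x n - 1 + q n)) :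
    lam * (1 - α) / (lam - 1) ≤ ∑' i : ℕ, lam ^ (-(i : ℤ)) * q i := by
  have hlam0 : 0 < lam := zero_lt_one.trans hlam
  have hr0 : 0 ≤ lam⁻¹ := inv_nonneg.2 hlam0.le
  have hr1 : lam⁻¹ < 1 := inv_lt_one_of_one_lt₀ hlam
  have hG : HasSum (fun i => lam⁻¹ ^ i * q i) (∑' i : ℕ, lam ^ (-(i : ℤ)) * q i) := by
    simpa only [zpow_neg, zpow_natCast, inv_pow] using
      (summable_pow_mul_of_unitInterval hr0 hr1 hq).hasSum
  have hF : (1 - α * lam⁻¹) * (1 - lam⁻¹)⁻¹ - α = lam * (1 - α) / (lam - 1) := by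
    have : lam - 1 ≠ 0 := sub_ne_zero.2 hlam.ne'
    field_simp
    ring
  have hbound : Tendsto (fun N => (1 - α * lam⁻¹) * ∑ n ∈ range N, lam⁻¹ ^ n - α) atTop
      (𝓝 ((1 - α * lam⁻¹) * (1 - lam⁻¹)⁻¹ - α)) :=
    ((hasSum_geometric_of_lt_one hr0 hr1).tendsto_sum_nat.const_mul _).sub_const _
  rw [← hF]
  refine le_of_tendsto_of_tendsto' hbound hG.tendsto_sum_nat fun N => ?_
  simpa only [hx0] using sum_range_inv_pow_mul_ge hlam0 hxnonneg hrec N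

/-- First part of the dichotomy lemma: if the expected-arrival sequence `x`
satisfies the parking recursion and stays nonnegative, then
`G(α) = ∑_{i≥0} λ^{-i} q i ≥ λ(1-α)/(λ-1) = F(α)`. -/
theorem stmt_2 (lam α : ℝ) (hlam : 1 < lam) (hα0 : 0 < α) (hα1 : α < 1)
    (q x : ℕ → ℝ)
    (hq : ∀ n : ℕ, 0 ≤ q n ∧ q n ≤ 1)
    (hxnonneg : ∀ n : ℕ, 0 ≤ x n)
    (hx0 : x 0 = α) (hrec : ∀ n : ℕ, x (n + 1) = α + lam * (x n - 1 + q n)) :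
    lam * (1 - α) / (lam - 1) ≤ ∑' i : ℕ, lam ^ (-(i : ℤ)) * q i :=
  stmt_2_general lam α hlam q x hq hxnonneg hx0 hrec
end

section
/- Let λ > 1 and 0 < α < 1 be real numbers. Let (q_n)_{n≥0} be a sequence of reals with 0 ≤ q_n ≤ 1 for all n, and let (x_n)_{n≥0} be a sequence of reals satisfying x_0 = α and x_{n+1} = α + λ·(x_n − 1 + q_n) for all n ≥ 0. If ∑_{i=0}^{∞} λ^{−i} q_i > λ(1−α)/(λ−1), then there exist δ > 0 and N ∈ ℕ such that x_n ≥ δ·λ^n for all n ≥ N; in particular x_n → ∞ as n → ∞. -/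
/-!
Dividing the recursion by `λ^(n+1)` turns it into a telescoping sum: `x n / λ^n` converges to
`α + ∑ₖ (α + λ (q k - 1)) / λ^(k+1) = G(α) - F(α)`. When this limit is positive, `x n` is
eventually at least half of it times `λ^n`.
-/

open Filter Finset Topology

theorem div_pow_eq_add_sum_of_rec {lam : ℝ} (hlam : lam ≠ 0) {x c : ℕ → ℝ}
    (hrec : ∀ n, x (n + 1) = lam * x n + c n) (n : ℕ) :
    x n / lam ^ n = x 0 + ∑ k ∈ range n, c k / lam ^ (k + 1) := by
  induction n with
  | zero => simp
  | succ n ih =>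
    rw [sum_range_succ, ← add_assoc, ← ih, hrec, pow_succ]
    field_simp

theorem tendsto_div_pow_of_rec {lam s : ℝ} (hlam : lam ≠ 0) {x c : ℕ → ℝ}
    (hrec : ∀ n, x (n + 1) = lam * x n + c n)
    (hc : HasSum (fun k => c k / lam ^ (k + 1)) s) :
    Tendsto (fun n => x n / lam ^ n) atTop (𝓝 (x 0 + s)) := by
  simp only [div_pow_eq_add_sum_of_rec hlam hrec]
  exact hc.tendsto_sum_nat.const_add _

theorem exists_mul_pow_le_and_tendsto_atTop {lam L : ℝ} (hlam : 1 < lam) (hL : 0 < L)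
    {x : ℕ → ℝ} (hx : Tendsto (fun n => x n / lam ^ n) atTop (𝓝 L)) :
    (∃ δ : ℝ, 0 < δ ∧ ∃ N : ℕ, ∀ n : ℕ, N ≤ n → δ * lam ^ n ≤ x n) ∧
      Tendsto x atTop atTop := by
  have hpow : ∀ n : ℕ, 0 < lam ^ n := fun n => pow_pos (by linarith) n
  have hx_eq : (fun n => x n / lam ^ n * lam ^ n) = x :=
    funext fun n => div_mul_cancel₀ _ (hpow n).ne'
  refine ⟨?_, hx_eq ▸ hx.pos_mul_atTop hL (tendsto_pow_atTop_atTop_of_one_lt hlam)⟩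
  obtain ⟨N, hN⟩ := eventually_atTop.mp (hx.eventually (eventually_gt_nhds (half_lt_self hL)))
  refine ⟨L / 2, half_pos hL, N, fun n hn => ?_⟩
  exact (le_div_iff₀ (hpow n)).mp (hN n hn).le

theorem summable_zpow_neg_mul {lam : ℝ} (hlam : 1 < lam) {q : ℕ → ℝ}
    (hq : ∀ n, 0 ≤ q n ∧ q n ≤ 1) :
    Summable fun i : ℕ => lam ^ (-(i : ℤ)) * q i := by
  have hr : 0 < lam⁻¹ := inv_pos.mpr (by linarith)
  refine (summable_geometric_of_lt_one hr.le (inv_lt_one_of_one_lt₀ hlam)).of_nonneg_of_le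
    (fun i => ?_) (fun i => ?_)
  all_goals rw [zpow_neg, zpow_natCast, ← inv_pow]
  · exact mul_nonneg (pow_nonneg hr.le i) (hq i).1
  · exact mul_le_of_le_one_right (pow_nonneg hr.le i) (hq i).2

theorem hasSum_parking_increment {lam α : ℝ} (hlam : 1 < lam) {q : ℕ → ℝ}
    (hq : Summable fun i : ℕ => lam ^ (-(i : ℤ)) * q i) :
    HasSum (fun k => (α + lam * (q k - 1)) / lam ^ (k + 1))
      ((∑' i : ℕ, lam ^ (-(i : ℤ)) * q i) + (α - lam) / (lam - 1)) := by
  have hr : 0 < lam⁻¹ := inv_pos.mpr (by linarith)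
  have hgeo := (hasSum_geometric_of_lt_one hr.le (inv_lt_one_of_one_lt₀ hlam)).mul_left
    ((α - lam) / lam)
  convert hq.hasSum.add hgeo using 1
  · funext k
    rw [zpow_neg, zpow_natCast, inv_pow]
    field_simp
    ring
  · field_simp

theorem stmt_4_general (lam α : ℝ) (hlam : 1 < lam)
    (q x : ℕ → ℝ)
    (hq : ∀ n : ℕ, 0 ≤ q n ∧ q n ≤ 1)
    (hx0 : x 0 = α) (hrec : ∀ n : ℕ, x (n + 1) = α + lam * (x n - 1 + q n))
    (hGF : lam * (1 - α) / (lam - 1) < ∑' i : ℕ, lam ^ (-(i : ℤ)) * q i) :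
    (∃ δ : ℝ, 0 < δ ∧ ∃ N : ℕ, ∀ n : ℕ, N ≤ n → δ * lam ^ n ≤ x n) ∧
      Filter.Tendsto x Filter.atTop Filter.atTop := by
  have hlam0 : lam ≠ 0 := by positivity
  have hrec' : ∀ n, x (n + 1) = lam * x n + (α + lam * (q n - 1)) := fun n => by
    rw [hrec]; ring
  have hlim := tendsto_div_pow_of_rec hlam0 hrec'
    (hasSum_parking_increment hlam (summable_zpow_neg_mul hlam hq))
  refine exists_mul_pow_le_and_tendsto_atTop hlam ?_ hlim
  have hF : α + (α - lam) / (lam - 1) = -(lam * (1 - α) / (lam - 1)) := by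
    field_simp [show lam - 1 ≠ 0 by linarith]
    ring
  linarith

/-- The other direction of the finiteness criterion: if `G(α) > F(α)`, then the
sequence `x` eventually grows at least like `δ λ^n` for some `δ > 0`, and in
particular `x n → ∞`. -/
theorem stmt_4 (lam α : ℝ) (hlam : 1 < lam) (hα0 : 0 < α) (hα1 : α < 1)
    (q x : ℕ → ℝ)
    (hq : ∀ n : ℕ, 0 ≤ q n ∧ q n ≤ 1)
    (hx0 : x 0 = α) (hrec : ∀ n : ℕ, x (n + 1) = α + lam * (x n - 1 + q n))
    (hGF : lam * (1 - α) / (lam - 1) < ∑' i : ℕ, lam ^ (-(i : ℤ)) * q i) :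
    (∃ δ : ℝ, 0 < δ ∧ ∃ N : ℕ, ∀ n : ℕ, N ≤ n → δ * lam ^ n ≤ x n) ∧
      Filter.Tendsto x Filter.atTop Filter.atTop :=
  stmt_4_general lam α hlam q x hq hx0 hrec hGF
end

section
/- Let A ⊆ ℝ and let f : ℝ → ℕ → ℝ satisfy, for every α ∈ A: f(α, k) ≥ 0 for all k, ∑_{k=0}^{∞} f(α, k) = 1, and ∑_{k=0}^{∞} k·f(α, k) = α. Assume the family is stochastically increasing: for all α, α' ∈ A with α ≤ α' and every m ∈ ℕ, ∑_{k=m+1}^{∞} f(α, k) ≤ ∑_{k=m+1}^{∞} f(α', k). Then for every k ∈ ℕ, the map α ↦ f(α, k) is continuous on A. -/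
/-!
Write `T α m = ∑_{k > m} f α k` for the tails. Counting each `k` once for every `m < k` gives
`∑_m T α m = ∑_k k f α k = α`. For `α ≤ α'` the differences `T α' m - T α m` are nonnegative by
stochastic monotonicity and sum to `α' - α`, so each of them is at most `α' - α`: every tail is
1-Lipschitz in `α` on `A`. A point mass is a difference of consecutive tails (or `1 - T α 0`),
hence continuous.
-/

open Finset.HasAntidiagonal

noncomputable def tail (p : ℕ → ℝ) (m : ℕ) : ℝ :=
  ∑' k, p (k + m + 1)

theorem hasSum_sigma_of_nonneg {ι : Type*} {κ : ι → Type*} {f : (Σ i, κ i) → ℝ} {g : ι → ℝ}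
    {a : ℝ} (hf : 0 ≤ f) (hfiber : ∀ i, HasSum (fun j => f ⟨i, j⟩) (g i)) (hg : HasSum g a) :
    HasSum f a := by
  have hsum : Summable f :=
    (summable_sigma_of_nonneg hf).2
      ⟨fun i => (hfiber i).summable, hg.summable.congr fun i => (hfiber i).tsum_eq.symm⟩
  have hf_sum := hsum.hasSum
  rwa [(hf_sum.sigma hfiber).unique hg] at hf_sum

theorem hasSum_tail_of_hasSum_mul {p : ℕ → ℝ} {a : ℝ} (hp : 0 ≤ p)
    (hmean : HasSum (fun k : ℕ => (k : ℝ) * p k) a) : HasSum (tail p) a := by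
  let g : ℕ × ℕ → ℝ := fun x => p (x.2 + x.1 + 1)
  -- On the antidiagonal `m + k = n` the summand is constantly `p (n + 1)`, with `n + 1` terms.
  have hfiber : ∀ n, HasSum (fun x : antidiagonal n => g x) ((n + 1 : ℕ) * p (n + 1)) := by
    intro n
    have hsum_fiber : ∑ x ∈ antidiagonal n, g x = (n + 1 : ℕ) * p (n + 1) := by
      rw [Finset.sum_congr rfl fun x hx =>
          show p (x.2 + x.1 + 1) = p (n + 1) by rw [add_comm x.2, mem_antidiagonal.1 hx],
        Finset.sum_const, Finset.Nat.card_antidiagonal, nsmul_eq_mul]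
    rw [← hsum_fiber, ← Finset.sum_coe_sort]
    exact hasSum_fintype _
  have hshift : HasSum (fun n => ((n + 1 : ℕ) : ℝ) * p (n + 1)) a := by
    simpa using (hasSum_nat_add_iff' 1).2 hmean
  have hg : HasSum g a := by
    rw [← (sigmaAntidiagonalEquivProd (A := ℕ)).hasSum_iff]
    exact hasSum_sigma_of_nonneg (fun _ => hp _) hfiber hshift
  exact hg.prod_fiberwise fun m => (hg.summable.prod_factor m).hasSum

theorem tail_sub_tail_succ {p : ℕ → ℝ} (hp : Summable p) (m : ℕ) :
    tail p m - tail p (m + 1) = p (m + 1) := by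
  have hshift : Summable fun k => p (k + m + 1) :=
    ((summable_nat_add_iff (m + 1)).2 hp).congr fun k => by rw [add_assoc]
  rw [tail, tail, hshift.tsum_eq_zero_add]
  simp only [zero_add, add_right_comm _ 1 m, add_assoc, add_sub_cancel_right]

theorem tsum_sub_tail_zero {p : ℕ → ℝ} (hp : Summable p) : ∑' k, p k - tail p 0 = p 0 := by
  rw [hp.tsum_eq_zero_add, tail]
  simp only [add_zero, add_sub_cancel_right]

theorem MonotoneOn.lipschitzOnWith_apply_of_hasSum {ι : Type*} {T : ℝ → ι → ℝ} {A : Set ℝ}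
    (hmono : MonotoneOn T A) (hsum : ∀ α ∈ A, HasSum (T α) α) (i : ι) :
    LipschitzOnWith 1 (fun α => T α i) A := by
  refine LipschitzOnWith.of_le_add fun α hα α' hα' => ?_
  rcases le_total α α' with hle | hle
  · linarith [hmono hα hα' hle i, dist_nonneg (x := α) (y := α')]
  · have hdiff : HasSum (fun j => T α j - T α' j) (α - α') := (hsum α hα).sub (hsum α' hα')
    have hi : T α i - T α' i ≤ α - α' :=
      le_hasSum hdiff i fun j _ => sub_nonneg.2 (hmono hα' hα hle j)
    linarith [le_abs_self (α - α'), Real.dist_eq α α']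

/-- Continuity of point masses for a stochastically increasing family of
probability mass functions on ℕ with mean `α`: if the tail sums
`∑_{k>m} f α k` are nondecreasing in `α` on `A`, then each point mass
`α ↦ f α k` is continuous on `A`. -/
theorem stmt_6 (A : Set ℝ) (f : ℝ → ℕ → ℝ)
    (hnonneg : ∀ α ∈ A, ∀ k : ℕ, 0 ≤ f α k)
    (hprob : ∀ α ∈ A, HasSum (fun k : ℕ => f α k) 1)
    (hmean : ∀ α ∈ A, HasSum (fun k : ℕ => (k : ℝ) * f α k) α)
    (hstoch : ∀ α ∈ A, ∀ α' ∈ A, α ≤ α' → ∀ m : ℕ,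
        (∑' k : ℕ, f α (k + m + 1)) ≤ ∑' k : ℕ, f α' (k + m + 1)) :
    ∀ k : ℕ, ContinuousOn (fun α => f α k) A := by
  have htail : ∀ m, ContinuousOn (fun α => tail (f α) m) A := fun m =>
    (MonotoneOn.lipschitzOnWith_apply_of_hasSum (T := fun α => tail (f α))
      (fun α hα α' hα' hle => hstoch α hα α' hα' hle)
      (fun α hα => hasSum_tail_of_hasSum_mul (hnonneg α hα) (hmean α hα)) m).continuousOn
  rintro (_ | m)
  · refine ((continuousOn_const (c := (1 : ℝ))).sub (htail 0)).congr fun α hα => ?_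
    show f α 0 = 1 - tail (f α) 0
    rw [← tsum_sub_tail_zero (hprob α hα).summable, (hprob α hα).tsum_eq]
  · exact ((htail m).sub (htail (m + 1))).congr fun α hα =>
      (tail_sub_tail_succ (hprob α hα).summable m).symm
end

section
/- Let 0 < α < 1 be real and let ν be a probability mass function on ℕ (a PMF) with ν(1) = 0 and mean ∑_{k=0}^{∞} k·ν(k) = α. Then for every bounded nondecreasing function φ : ℝ → ℝ that is convex on [0, ∞), one has (1 − α/2)·φ(0) + (α/2)·φ(2) ≤ ∑_{k=0}^{∞} φ(k)·ν(k). -/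
open scoped ENNReal

/-!
Since `ν 1 = 0`, the support of `ν` lies in `{0} ∪ [2, ∞)`, where convexity puts `φ` above
its chord `ℓ` through `(0, φ 0)` and `(2, φ 2)`. Integrating against `ν` gives
`∑ φ(k) ν(k) ≥ ∑ ℓ(k) ν(k) = ℓ(α) = (1 - α/2) φ(0) + (α/2) φ(2)`.
-/

theorem ConvexOn.secant_zero_le_of_le {φ : ℝ → ℝ} (hφ : ConvexOn ℝ (Set.Ici 0) φ) {a x : ℝ}
    (ha : 0 < a) (hax : a ≤ x) : φ 0 + (φ a - φ 0) / a * x ≤ φ x := by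
  have hx : 0 < x := ha.trans_le hax
  have hslope : (φ a - φ 0) / a ≤ (φ x - φ 0) / x := by
    simpa using hφ.secant_mono (Set.mem_Ici.2 le_rfl) ha.le hx.le ha.ne' hx.ne' hax
  calc φ 0 + (φ a - φ 0) / a * x ≤ φ 0 + (φ x - φ 0) / x * x := by gcongr
    _ = φ x := by field_simp; ring

namespace PMF

theorem hasSum_toReal {α : Type*} (ν : PMF α) : HasSum (fun a => (ν a).toReal) 1 := by
  have h := ENNReal.hasSum_toReal (f := ν) (by simp)
  rwa [← ENNReal.tsum_toReal_eq ν.apply_ne_top, ν.tsum_coe, ENNReal.toReal_one] at h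

theorem hasSum_mul_toReal_of_tsum_eq_ofReal {ν : PMF ℕ} {m : ℝ} (hm : 0 ≤ m)
    (hmean : ∑' k : ℕ, (k : ℝ≥0∞) * ν k = ENNReal.ofReal m) :
    HasSum (fun k : ℕ => (k : ℝ) * (ν k).toReal) m := by
  have h := ENNReal.hasSum_toReal (hmean ▸ ENNReal.ofReal_ne_top)
  rw [← ENNReal.tsum_toReal_eq fun k => ENNReal.mul_ne_top (ENNReal.natCast_ne_top k)
    (ν.apply_ne_top k), hmean, ENNReal.toReal_ofReal hm] at h
  simpa only [ENNReal.toReal_mul, ENNReal.toReal_natCast] using h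

theorem add_mul_mean_le_tsum {ν : PMF ℕ} {m : ℝ}
    (hmean : HasSum (fun k : ℕ => (k : ℝ) * (ν k).toReal) m) {f : ℕ → ℝ}
    (hf : ∃ C, ∀ k, |f k| ≤ C) {a b : ℝ} (hab : ∀ k, ν k ≠ 0 → a + b * k ≤ f k) :
    a + b * m ≤ ∑' k, f k * (ν k).toReal := by
  obtain ⟨C, hC⟩ := hf
  have hsummable : Summable fun k => f k * (ν k).toReal := by
    refine Summable.of_norm_bounded (ν.hasSum_toReal.summable.mul_left C) fun k => ?_
    rw [norm_mul, Real.norm_eq_abs, Real.norm_of_nonneg ENNReal.toReal_nonneg]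
    exact mul_le_mul_of_nonneg_right (hC k) ENNReal.toReal_nonneg
  have hlhs : HasSum (fun k : ℕ => a * (ν k).toReal + b * ((k : ℝ) * (ν k).toReal))
      (a + b * m) := by
    simpa using (ν.hasSum_toReal.mul_left a).add (hmean.mul_left b)
  refine hasSum_le (fun k => ?_) hlhs hsummable.hasSum
  rcases eq_or_ne (ν k) 0 with h0 | h0
  · simp [h0]
  · nlinarith [hab k h0, ENNReal.toReal_nonneg (a := ν k)]

end PMF

theorem stmt_12_general (α : ℝ) (hα0 : 0 < α) (ν : PMF ℕ)
    (hν1 : ν 1 = 0)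
    (hmean : ∑' k : ℕ, (k : ℝ≥0∞) * ν k = ENNReal.ofReal α) :
    ∀ φ : ℝ → ℝ, (∃ C : ℝ, ∀ x : ℝ, |φ x| ≤ C) → Monotone φ →
      ConvexOn ℝ (Set.Ici (0 : ℝ)) φ →
      (1 - α / 2) * φ 0 + (α / 2) * φ 2 ≤ ∑' k : ℕ, φ k * (ν k).toReal := by
  rintro φ ⟨C, hC⟩ - hconv
  have hchord : ∀ k : ℕ, ν k ≠ 0 → φ 0 + (φ 2 - φ 0) / 2 * k ≤ φ k := by
    intro k hk
    obtain rfl | rfl | hk2 : k = 0 ∨ k = 1 ∨ 2 ≤ k := by omega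
    · simp
    · exact absurd hν1 hk
    · exact hconv.secant_zero_le_of_le two_pos (by exact_mod_cast hk2)
  have h := PMF.add_mul_mean_le_tsum (PMF.hasSum_mul_toReal_of_tsum_eq_ofReal hα0.le hmean)
    ⟨C, fun k => hC k⟩ hchord
  linarith

/-- The Bernoulli-type distribution (value 2 with probability `α/2`, else 0) is
minimal in the increasing convex order among mean-`α` distributions on ℕ whose
support avoids 1: for any such PMF `ν` and any bounded nondecreasing `φ` convex
on `[0, ∞)`, `(1 - α/2) φ(0) + (α/2) φ(2) ≤ ∑_k φ(k) ν(k)`. -/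
theorem stmt_12 (α : ℝ) (hα0 : 0 < α) (hα1 : α < 1) (ν : PMF ℕ)
    (hν1 : ν 1 = 0)
    (hmean : ∑' k : ℕ, (k : ℝ≥0∞) * ν k = ENNReal.ofReal α) :
    ∀ φ : ℝ → ℝ, (∃ C : ℝ, ∀ x : ℝ, |φ x| ≤ C) → Monotone φ →
      ConvexOn ℝ (Set.Ici (0 : ℝ)) φ →
      (1 - α / 2) * φ 0 + (α / 2) * φ 2 ≤ ∑' k : ℕ, φ k * (ν k).toReal :=
  stmt_12_general α hα0 ν hν1 hmean
end

section
/- Let S : PMF ℕ → ℕ → PMF ℕ satisfy S ν 0 = pure 0 and S ν (z+1) = (S ν z).bind (fun t => ν.bind (fun x => pure (t + x))) for all ν and z. Let Z and η be PMFs on ℕ, set λ = ∑'_{z} z·Z(z) and α = ∑'_{k} k·η(k) in ℝ≥0∞, and define PMFs μ_n on ℕ by μ_0 = η and μ_{n+1} = η.bind (fun e => (Z.bind (fun z => S (μ_n.map (fun x => x − 1)) z)).bind (fun s => pure (e + s))), where x − 1 denotes truncated subtraction on ℕ. Then for every n ≥ 0, in ℝ≥0∞ (with truncated subtraction): ∑'_{k}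 k·μ_{n+1}(k) = α + λ·(∑'_{k} k·μ_n(k) − (1 − μ_n(0))). -/
/-!
Taking means turns each constructor of the recursion into an operation on numbers:
an independent sum adds means, an `S ν z`-fold sum multiplies the mean of `ν` by `z`,
randomising `z` according to `Z` (Wald's identity) replaces `z` by the mean `λ` of `Z`,
and `x ↦ x - 1` lowers the mean by `P(X > 0) = 1 - μ 0`, the subtraction being exact
in `ℝ≥0∞` because `1 - μ 0` is finite.
-/

open scoped ENNReal

namespace PMF

noncomputable def mean (p : PMF ℕ) : ℝ≥0∞ := ∑' k : ℕ, (k : ℝ≥0∞) * p k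

theorem mean_bind {α : Type*} (p : PMF α) (f : α → PMF ℕ) :
    (p.bind f).mean = ∑' a, p a * (f a).mean := by
  simp only [mean, bind_apply, ← ENNReal.tsum_mul_left]
  rw [ENNReal.tsum_comm]
  exact tsum_congr fun a => tsum_congr fun k => mul_left_comm _ _ _

theorem mean_map {α : Type*} (p : PMF α) (f : α → ℕ) :
    (p.map f).mean = ∑' a, (f a : ℝ≥0∞) * p a := by
  rw [map, mean_bind]
  refine tsum_congr fun a => ?_
  rw [Function.comp_apply, mean, tsum_eq_single (f a) fun k hk => by simp [hk]]
  simp [mul_comm]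

theorem mean_bind_bind_add (p q : PMF ℕ) :
    (p.bind fun a => q.bind fun b => pure (a + b)).mean = p.mean + q.mean := by
  have mean_shift : ∀ a, (q.bind fun b => pure (a + b)).mean = a + q.mean := fun a => by
    rw [← Function.comp_def pure, ← map, mean_map, mean]
    simp only [Nat.cast_add, add_mul, ENNReal.tsum_add, ENNReal.tsum_mul_left, tsum_coe, mul_one]
  simp only [mean_bind, mean_shift, mul_add, ENNReal.tsum_add, ENNReal.tsum_mul_right,
    tsum_coe, one_mul]
  simp only [mean, mul_comm]

theorem mean_bind_eq_mean_mul (p : PMF ℕ) (f : ℕ → PMF ℕ) (c : ℝ≥0∞)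
    (hf : ∀ z, (f z).mean = z * c) : (p.bind f).mean = p.mean * c := by
  rw [mean_bind, mean, ← ENNReal.tsum_mul_right]
  exact tsum_congr fun z => by rw [hf, mul_left_comm, mul_assoc]

theorem mean_map_pred (p : PMF ℕ) : (p.map (· - 1)).mean = p.mean - (1 - p 0) := by
  have hsplit : (1 : ℝ≥0∞) = p 0 + ∑' k, p (k + 1) := by
    rw [← p.tsum_coe, tsum_eq_zero_add' ENNReal.summable]
  have hpos : 1 - p 0 = ∑' k, p (k + 1) := by
    rw [hsplit, ENNReal.add_sub_cancel_left (p.apply_ne_top 0)]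
  have hfinite : 1 - p 0 ≠ ∞ := ne_top_of_le_ne_top ENNReal.one_ne_top tsub_le_self
  have hmean : p.mean = (p.map (· - 1)).mean + (1 - p 0) := by
    rw [mean_map, mean, hpos,
      tsum_eq_zero_add' (f := fun k => (k : ℝ≥0∞) * p k) ENNReal.summable,
      tsum_eq_zero_add' (f := fun k => ((k - 1 : ℕ) : ℝ≥0∞) * p k) ENNReal.summable]
    simp [add_mul, ENNReal.tsum_add]
  rw [hmean, ENNReal.add_sub_cancel_right hfinite]

theorem mean_of_iterated_sum (S : PMF ℕ → ℕ → PMF ℕ)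
    (hS0 : ∀ ν : PMF ℕ, S ν 0 = pure 0)
    (hSs : ∀ (ν : PMF ℕ) (z : ℕ),
      S ν (z + 1) = (S ν z).bind (fun t => ν.bind (fun x => pure (t + x))))
    (ν : PMF ℕ) (z : ℕ) : (S ν z).mean = z * ν.mean := by
  induction z with
  | zero => simp [hS0, mean]
  | succ z ih => rw [hSs, mean_bind_bind_add, ih]; push_cast; ring

end PMF

theorem stmt_14_general (S : PMF ℕ → ℕ → PMF ℕ)
    (hS0 : ∀ ν : PMF ℕ, S ν 0 = PMF.pure 0)
    (hSs : ∀ (ν : PMF ℕ) (z : ℕ),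
      S ν (z + 1) = (S ν z).bind (fun t => ν.bind (fun x => PMF.pure (t + x))))
    (Z η : PMF ℕ) (lam α : ℝ≥0∞)
    (hlam : lam = ∑' z : ℕ, (z : ℝ≥0∞) * Z z)
    (hα : α = ∑' k : ℕ, (k : ℝ≥0∞) * η k)
    (μ : ℕ → PMF ℕ)
    (hμs : ∀ n : ℕ, μ (n + 1) = η.bind (fun e =>
      (Z.bind (fun z => S ((μ n).map (fun x => x - 1)) z)).bind
        (fun s => PMF.pure (e + s)))) :
    ∀ n : ℕ, ∑' k : ℕ, (k : ℝ≥0∞) * (μ (n + 1)) k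
      = α + lam * ((∑' k : ℕ, (k : ℝ≥0∞) * (μ n) k) - (1 - (μ n) 0)) := by
  intro n
  change (μ (n + 1)).mean = α + lam * ((μ n).mean - (1 - μ n 0))
  rw [hμs n, PMF.mean_bind_bind_add, ← PMF.mean_map_pred, hα, hlam,
    PMF.mean_bind_eq_mean_mul _ _ _ (PMF.mean_of_iterated_sum S hS0 hSs _)]
  rfl

/-- Expectation recursion for the parking process:
`E[X_{n+1}] = α + λ (E[X_n] - P(X_n > 0))`, stated in `ℝ≥0∞` for the laws
`μ n` of the number of cars arriving at the root by time `n`. -/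
theorem stmt_14 (S : PMF ℕ → ℕ → PMF ℕ)
    (hS0 : ∀ ν : PMF ℕ, S ν 0 = PMF.pure 0)
    (hSs : ∀ (ν : PMF ℕ) (z : ℕ),
      S ν (z + 1) = (S ν z).bind (fun t => ν.bind (fun x => PMF.pure (t + x))))
    (Z η : PMF ℕ) (lam α : ℝ≥0∞)
    (hlam : lam = ∑' z : ℕ, (z : ℝ≥0∞) * Z z)
    (hα : α = ∑' k : ℕ, (k : ℝ≥0∞) * η k)
    (μ : ℕ → PMF ℕ)
    (hμ0 : μ 0 = η)
    (hμs : ∀ n : ℕ, μ (n + 1) = η.bind (fun e =>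
      (Z.bind (fun z => S ((μ n).map (fun x => x - 1)) z)).bind
        (fun s => PMF.pure (e + s)))) :
    ∀ n : ℕ, ∑' k : ℕ, (k : ℝ≥0∞) * (μ (n + 1)) k
      = α + lam * ((∑' k : ℕ, (k : ℝ≥0∞) * (μ n) k) - (1 - (μ n) 0)) :=
  stmt_14_general S hS0 hSs Z η lam α hlam hα μ hμs
end

section
/- Let S : PMF ℕ → ℕ → PMF ℕ satisfy S ν 0 = pure 0 and S ν (z+1) = (S ν z).bind (fun t => ν.bind (fun x => pure (t + x))) for all ν and z. Let A ⊆ ℝ, let Z be a PMF on ℕ with ∑'_{z} z·Z(z) < ∞, and let η : ℝ → PMF ℕ be a family such that for every k ∈ ℕ the map α ↦ ((η α)(k)).toReal is continuous on A. For each α ∈ A define PMFs μ(α, n) on ℕ by μ(α, 0) = η(α) and μ(α, n+1) = (η α).bind (fun e => (Z.bind (fun z => S ((μ(α, n)).map (fun x => x − 1)) z)).bind (fun s => pure (e + s))), where x − 1 is truncated subtraction on ℕ. Then for every n ≥ 0, the map α ↦ ((μ(α, n))(0)).toReal is continuous on A. -/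
/-!
Call a family of probability mass functions pointwise continuous if each of its point masses
depends continuously on the parameter. This property is preserved by pushing forward along a map
with finite fibres (such as `x ↦ x - 1`), by convolution (each point mass of a convolution on `ℕ`
is a finite sum of products), hence by convolution powers, and by mixing with fixed weights
(dominated convergence of the series). The recursion for `μ α (n + 1)` is built from `μ α n` and
`η α` by exactly these operations, so induction on `n` shows every point mass of `μ α n`, in
particular `q_n = μ α n 0`, is continuous on `A`.
-/

namespace PMF

open Finset

theorem bind_bind_pure_add_apply {M : Type*} [AddMonoid M] [HasAntidiagonal M]
    (p q : PMF M) (m : M) :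
    (p.bind fun a => q.bind fun b => pure (a + b)) m
      = ∑ ab ∈ antidiagonal m, p ab.1 * q ab.2 := by
  classical
  calc (p.bind fun a => q.bind fun b => pure (a + b)) m
      = ∑' ab : M × M, if ab ∈ antidiagonal m then p ab.1 * q ab.2 else 0 := by
        simp only [bind_apply, pure_apply, ENNReal.tsum_prod', ← ENNReal.tsum_mul_left,
          HasAntidiagonal.mem_antidiagonal, mul_ite, mul_one, mul_zero, @eq_comm _ m]
    _ = ∑ ab ∈ antidiagonal m, p ab.1 * q ab.2 := by
        rw [tsum_eq_sum (s := antidiagonal m) fun ab h => if_neg h, sum_ite_mem, inter_self]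

variable {X α ι : Type*} [TopologicalSpace X]

def ApplyContinuousOn (p : X → PMF α) (s : Set X) : Prop :=
  ∀ a, ContinuousOn (fun x => (p x a).toReal) s

namespace ApplyContinuousOn

variable {s : Set X}

theorem const (p : PMF α) : ApplyContinuousOn (fun _ : X => p) s :=
  fun _ => continuousOn_const

theorem map {β : Type*} {p : X → PMF α} (hp : ApplyContinuousOn p s) {f : α → β}
    (hf : ∀ b, (f ⁻¹' {b}).Finite) : ApplyContinuousOn (fun x => (p x).map f) s := by
  classical
  intro b
  have hsum : ∀ x, ((p x).map f b).toReal = ∑ a ∈ (hf b).toFinset, (p x a).toReal := by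
    intro x
    rw [map_apply, tsum_eq_sum (s := (hf b).toFinset) fun a ha => if_neg ?_,
      ← ENNReal.toReal_sum fun a _ => apply_ne_top _ _]
    · refine congrArg _ (sum_congr rfl fun a ha => if_pos ?_)
      simpa [eq_comm] using ha
    · simpa [eq_comm] using ha
  simp only [hsum]
  exact continuousOn_finsetSum _ fun a _ => hp a

theorem bind_bind_pure_add {M : Type*} [AddMonoid M] [HasAntidiagonal M] {p q : X → PMF M}
    (hp : ApplyContinuousOn p s) (hq : ApplyContinuousOn q s) :
    ApplyContinuousOn (fun x => (p x).bind fun a => (q x).bind fun b => pure (a + b)) s := by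
  intro m
  have hsum : ∀ x, ((p x).bind (fun a => (q x).bind fun b => pure (a + b)) m).toReal
      = ∑ ab ∈ antidiagonal m, (p x ab.1).toReal * (q x ab.2).toReal := by
    intro x
    rw [bind_bind_pure_add_apply, ENNReal.toReal_sum fun ab _ =>
      ENNReal.mul_ne_top (apply_ne_top _ _) (apply_ne_top _ _)]
    simp only [ENNReal.toReal_mul]
  simp only [hsum]
  exact continuousOn_finsetSum _ fun ab _ => (hp ab.1).mul (hq ab.2)

/-- The tail of the mixture is dominated by the weights `Z i`, uniformly in `x`. -/
theorem bind_left (Z : PMF ι) {q : X → ι → PMF α} (hq : ∀ i, ApplyContinuousOn (q · i) s) :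
    ApplyContinuousOn (fun x => Z.bind (q x)) s := by
  intro a
  have hsum : ∀ x, (Z.bind (q x) a).toReal = ∑' i, (Z i).toReal * (q x i a).toReal := by
    intro x
    rw [bind_apply, ENNReal.tsum_toReal_eq fun i =>
      ENNReal.mul_ne_top (apply_ne_top _ _) (apply_ne_top _ _)]
    simp only [ENNReal.toReal_mul]
  simp only [hsum]
  refine continuousOn_tsum (fun i => continuousOn_const.mul (hq i a))
    (ENNReal.summable_toReal (Z.tsum_coe ▸ ENNReal.one_ne_top)) fun i x _ => ?_
  rw [Real.norm_of_nonneg (by positivity)]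
  exact mul_le_of_le_one_right ENNReal.toReal_nonneg (ENNReal.toReal_le_of_le_ofReal zero_le_one
    (ENNReal.ofReal_one ▸ coe_le_one _ _))

theorem convPow {M : Type*} [AddMonoid M] [HasAntidiagonal M] (S : PMF M → ℕ → PMF M)
    (hS0 : ∀ ν, S ν 0 = pure 0)
    (hSs : ∀ ν z, S ν (z + 1) = (S ν z).bind fun t => ν.bind fun x => pure (t + x))
    {ν : X → PMF M} (hν : ApplyContinuousOn ν s) (z : ℕ) :
    ApplyContinuousOn (fun x => S (ν x) z) s := by
  induction z with
  | zero => simpa only [hS0] using const (pure 0)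
  | succ z ih => simpa only [hSs] using ih.bind_bind_pure_add hν

end ApplyContinuousOn

end PMF

open scoped ENNReal

theorem stmt_16_general (S : PMF ℕ → ℕ → PMF ℕ)
    (hS0 : ∀ ν : PMF ℕ, S ν 0 = PMF.pure 0)
    (hSs : ∀ (ν : PMF ℕ) (z : ℕ),
      S ν (z + 1) = (S ν z).bind (fun t => ν.bind (fun x => PMF.pure (t + x))))
    (A : Set ℝ) (Z : PMF ℕ)
    (η : ℝ → PMF ℕ)
    (hη : ∀ k : ℕ, ContinuousOn (fun α => ((η α) k).toReal) A)
    (μ : ℝ → ℕ → PMF ℕ)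
    (hμ0 : ∀ α : ℝ, μ α 0 = η α)
    (hμs : ∀ (α : ℝ) (n : ℕ), μ α (n + 1) = (η α).bind (fun e =>
      (Z.bind (fun z => S ((μ α n).map (fun x => x - 1)) z)).bind
        (fun s => PMF.pure (e + s)))) :
    ∀ n : ℕ, ContinuousOn (fun α => ((μ α n) 0).toReal) A := by
  suffices h : ∀ n, PMF.ApplyContinuousOn (fun α => μ α n) A from fun n => h n 0
  intro n
  induction n with
  | zero => simpa only [PMF.ApplyContinuousOn, hμ0] using hη
  | succ n ih =>
    have hpred : PMF.ApplyContinuousOn (fun α => (μ α n).map (· - 1)) A :=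
      ih.map fun b => (Set.finite_Iic (b + 1)).subset fun a ha => by
        simp only [Set.mem_preimage, Set.mem_singleton_iff, Set.mem_Iic] at ha ⊢
        omega
    simpa only [hμs] using PMF.ApplyContinuousOn.bind_bind_pure_add hη
      (.bind_left Z fun z => hpred.convPow S hS0 hSs z)

/-- Continuity of `q_n = P(X_n = 0)` in the arrival parameter: if the point
masses of the arrival distribution `η α` depend continuously on `α` on `A` and
the offspring distribution `Z` has finite mean, then for every `n` the map
`α ↦ (μ α n)(0)` is continuous on `A`, where `μ α n` is the law of the number
of cars arriving at the root by time `n`. -/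
theorem stmt_16 (S : PMF ℕ → ℕ → PMF ℕ)
    (hS0 : ∀ ν : PMF ℕ, S ν 0 = PMF.pure 0)
    (hSs : ∀ (ν : PMF ℕ) (z : ℕ),
      S ν (z + 1) = (S ν z).bind (fun t => ν.bind (fun x => PMF.pure (t + x))))
    (A : Set ℝ) (Z : PMF ℕ)
    (hZ : ∑' z : ℕ, (z : ℝ≥0∞) * Z z < ⊤)
    (η : ℝ → PMF ℕ)
    (hη : ∀ k : ℕ, ContinuousOn (fun α => ((η α) k).toReal) A)
    (μ : ℝ → ℕ → PMF ℕ)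
    (hμ0 : ∀ α : ℝ, μ α 0 = η α)
    (hμs : ∀ (α : ℝ) (n : ℕ), μ α (n + 1) = (η α).bind (fun e =>
      (Z.bind (fun z => S ((μ α n).map (fun x => x - 1)) z)).bind
        (fun s => PMF.pure (e + s)))) :
    ∀ n : ℕ, ContinuousOn (fun α => ((μ α n) 0).toReal) A :=
  stmt_16_general S hS0 hSs A Z η hη μ hμ0 hμs
end

section
/- Let d ≥ 2 be an integer and 0 < p < 1 a real number. Let η be the PMF on ℕ with η(2) = p, η(0) = 1 − p, and η(k) = 0 otherwise. Let S : PMF ℕ → ℕ → PMF ℕ satisfy S ν 0 = pure 0 and S ν (z+1) = (S ν z).bind (fun t => ν.bind (fun x => pure (t + x))) for all ν and z. Suppose μ is a PMF on ℕ satisfying the fixed-point equation μ = η.bind (fun e => (S (μ.map (fun x => x − 1)) d).bind (fun s => pure (e + s))), where x − 1 is truncated subtraction on ℕ. Then μ(0) > 0. -/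
/-! If `μ 0 = 0`, then `ν`, the law of `(X - 1)⁺`, is `μ` shifted down by one. Let `a` be the
least point of the support of `ν`. The `d`-fold convolution of `ν` starts at `d * a` with mass
`ν a ^ d`, hence `μ` starts at `d * a` with mass `(1 - p) * ν a ^ d`; but `μ` also starts at
`a + 1` with mass `ν a`. So `d * a = a + 1` and `ν a = (1 - p) * ν a ^ d ≤ (1 - p) * ν a < ν a`. -/

namespace PMF

noncomputable def addConv (μ ν : PMF ℕ) : PMF ℕ :=
  μ.bind fun a => ν.bind fun b => pure (a + b)

theorem bind_pure_add_apply (ν : PMF ℕ) (a n : ℕ) :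
    (ν.bind fun b => pure (a + b)) n = if a ≤ n then ν (n - a) else 0 := by
  rw [bind_apply]
  split_ifs with h
  · rw [tsum_eq_single (n - a)]
    · simp [pure_apply, Nat.add_sub_cancel' h]
    · intro b hb
      simp [pure_apply, show n ≠ a + b by omega]
  · exact ENNReal.tsum_eq_zero.mpr fun b => by simp [pure_apply, show n ≠ a + b by omega]

theorem addConv_apply (μ ν : PMF ℕ) (n : ℕ) :
    addConv μ ν n = ∑' a, μ a * if a ≤ n then ν (n - a) else 0 := by
  rw [addConv, bind_apply]
  exact tsum_congr fun a => by rw [bind_pure_add_apply]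

section LowestOrder

variable {μ ν : PMF ℕ} {b c : ℕ}

theorem addConv_apply_of_lt (hμ : ∀ k < b, μ k = 0) (hν : ∀ k < c, ν k = 0) {n : ℕ}
    (hn : n < b + c) : addConv μ ν n = 0 := by
  refine (addConv_apply μ ν n).trans (ENNReal.tsum_eq_zero.mpr fun a => ?_)
  by_cases ha : a < b
  · rw [hμ a ha, zero_mul]
  · split_ifs with han
    · rw [hν _ (by omega), mul_zero]
    · exact mul_zero _

theorem addConv_apply_add (hμ : ∀ k < b, μ k = 0) (hν : ∀ k < c, ν k = 0) :
    addConv μ ν (b + c) = μ b * ν c := by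
  rw [addConv_apply, tsum_eq_single b]
  · simp
  · intro a hab
    rcases lt_or_gt_of_ne hab with ha | ha
    · rw [hμ a ha, zero_mul]
    · split_ifs with h
      · rw [hν _ (by omega), mul_zero]
      · exact mul_zero _

end LowestOrder

theorem map_sub_one_apply {μ : PMF ℕ} (hμ : μ 0 = 0) (j : ℕ) :
    μ.map (fun x => x - 1) j = μ (j + 1) := by
  rw [map_apply, tsum_eq_single (j + 1)]
  · simp
  · intro x hx
    split_ifs with h
    · rw [show x = 0 by omega, hμ]
    · rfl

theorem exists_apply_ne_zero_forall_lt (μ : PMF ℕ) : ∃ a, μ a ≠ 0 ∧ ∀ k < a, μ k = 0 := by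
  classical
  have h : ∃ a, μ a ≠ 0 := μ.support_nonempty
  exact ⟨Nat.find h, Nat.find_spec h, fun k hk => not_not.mp (Nat.find_min h hk)⟩

section ConvPow

variable {ν : PMF ℕ} {T : ℕ → PMF ℕ} {a : ℕ}

theorem convPow_apply_of_lt_mul (hT : ∀ z, T (z + 1) = addConv (T z) ν)
    (hν : ∀ k < a, ν k = 0) (z : ℕ) : ∀ n < z * a, T z n = 0 := by
  induction z with
  | zero => simp
  | succ z ih =>
    intro n hn
    rw [hT]
    exact addConv_apply_of_lt ih hν (by rwa [← Nat.succ_mul])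

theorem convPow_apply_mul (hT0 : T 0 = pure 0) (hT : ∀ z, T (z + 1) = addConv (T z) ν)
    (hν : ∀ k < a, ν k = 0) (z : ℕ) : T z (z * a) = ν a ^ z := by
  induction z with
  | zero => simp [hT0]
  | succ z ih =>
    rw [hT, Nat.succ_mul, addConv_apply_add (convPow_apply_of_lt_mul hT hν z) hν, ih, pow_succ]

end ConvPow

end PMF

open PMF

theorem stmt_17_general (d : ℕ) (p : ℝ) (hp0 : 0 < p) (hp1 : p < 1)
    (η : PMF ℕ)
    (hη0 : η 0 = ENNReal.ofReal (1 - p))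
    (S : PMF ℕ → ℕ → PMF ℕ)
    (hS0 : ∀ ν : PMF ℕ, S ν 0 = PMF.pure 0)
    (hSs : ∀ (ν : PMF ℕ) (z : ℕ),
      S ν (z + 1) = (S ν z).bind (fun t => ν.bind (fun x => PMF.pure (t + x))))
    (μ : PMF ℕ)
    (hfix : μ = η.bind (fun e =>
      (S (μ.map (fun x => x - 1)) d).bind (fun s => PMF.pure (e + s)))) :
    0 < μ 0 := by
  set ν := μ.map (fun x => x - 1)
  replace hfix : μ = addConv η (S ν d) := hfix
  by_contra! hμ0
  replace hμ0 : μ 0 = 0 := nonpos_iff_eq_zero.mp hμ0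
  have hνμ : ∀ j, ν j = μ (j + 1) := map_sub_one_apply hμ0
  obtain ⟨a, hνa, hν⟩ := ν.exists_apply_ne_zero_forall_lt
  have hη0_pos : η 0 ≠ 0 := by simp [hη0, hp1]
  have hη0_lt : η 0 < 1 := by simp [hη0, hp0]
  have hSν := convPow_apply_of_lt_mul (hSs ν) hν d
  have hμ_lt : ∀ n < d * a, μ n = 0 := fun n hn =>
    hfix ▸ addConv_apply_of_lt (b := 0) (by simp) hSν (by omega)
  have hμ_da : μ (d * a) = η 0 * ν a ^ d := by
    rw [hfix, ← zero_add (d * a), addConv_apply_add (by simp) hSν,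
      convPow_apply_mul (hS0 ν) (hSs ν) hν]
  have hμ_le : ∀ n ≤ a, μ n = 0 := by
    rintro (_ | n) hn
    · exact hμ0
    · rw [← hνμ, hν n hn]
  have hda : d * a = a + 1 := by
    refine le_antisymm (not_lt.mp fun h => hνa ?_) (not_lt.mp fun h => ?_)
    · rw [hνμ, hμ_lt _ h]
    · simp [hμ_le _ (Nat.le_of_lt_succ h), hη0_pos, hνa] at hμ_da
  have hd0 : d ≠ 0 := by rintro rfl; simp at hda
  have : ν a < ν a :=
    calc ν a = μ (d * a) := by rw [hda, hνμ]
      _ = η 0 * ν a ^ d := hμ_da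
      _ ≤ η 0 * ν a := by gcongr; exact pow_le_of_le_one zero_le (ν.coe_le_one a) hd0
      _ < 1 * ν a := ENNReal.mul_lt_mul_left hνa (ν.apply_ne_top a) hη0_lt
      _ = ν a := one_mul _
  exact this.false

/-- Discontinuity core for Bernoulli parking on the `d`-ary tree: any PMF `μ`
on ℕ solving the fixed-point equation `X = η_ρ + ∑_{i=1}^d (X^{(i)} - 1)^+`
(with arrivals 2 w.p. `p`, 0 w.p. `1-p`) puts positive mass at 0. -/
theorem stmt_17 (d : ℕ) (hd : 2 ≤ d) (p : ℝ) (hp0 : 0 < p) (hp1 : p < 1)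
    (η : PMF ℕ)
    (hη2 : η 2 = ENNReal.ofReal p) (hη0 : η 0 = ENNReal.ofReal (1 - p))
    (hηother : ∀ k : ℕ, k ≠ 0 → k ≠ 2 → η k = 0)
    (S : PMF ℕ → ℕ → PMF ℕ)
    (hS0 : ∀ ν : PMF ℕ, S ν 0 = PMF.pure 0)
    (hSs : ∀ (ν : PMF ℕ) (z : ℕ),
      S ν (z + 1) = (S ν z).bind (fun t => ν.bind (fun x => PMF.pure (t + x))))
    (μ : PMF ℕ)
    (hfix : μ = η.bind (fun e =>
      (S (μ.map (fun x => x - 1)) d).bind (fun s => PMF.pure (e + s)))) :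
    0 < μ 0 :=
  stmt_17_general d p hp0 hp1 η hη0 S hS0 hSs μ hfix
end
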